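/- For any finite simple graph G, |nucleus(G)| + |diadem(G)| ≤ 2α(G). -/

import Mathlib

open Set

variable {V : Type*} [Fintype V]

/-- `S` is an independent set in `G`: no two of its vertices are adjacent. -/
def IsIndep (G : SimpleGraph V) (S : Set V) : Prop :=
  ∀ u ∈ S, ∀ v ∈ S, ¬ G.Adj u v

/-- The neighborhood `N(X)` of a set of vertices. -/
def nbhd (G : SimpleGraph V) (X : Set V) : Set V := {v | ∃ u ∈ X, G.Adj u v}

/-- The difference `d(X) = |X| - |N(X)|` computed in the induced subgraph `G[W]`
(neighborhoods are intersected with `W`). -/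
noncomputable def dOn (G : SimpleGraph V) (W X : Set V) : ℤ :=
  (X.ncard : ℤ) - ((nbhd G X ∩ W).ncard : ℤ)

/-- The difference `d(X) = |X| - |N(X)|` in `G`. -/
noncomputable def dG (G : SimpleGraph V) (X : Set V) : ℤ := dOn G Set.univ X

/-- `S` is a critical independent set of the induced subgraph `G[W]`:
it is an independent subset of `W` whose difference attains
`max {d(Y) : Y ⊆ W}` (the critical difference of `G[W]`). -/
def IsCritIndepOn (G : SimpleGraph V) (W S : Set V) : Prop :=
  S ⊆ W ∧ IsIndep G S ∧ ∀ Y ⊆ W, dOn G W Y ≤ dOn G W S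

/-- `S` is a critical independent set of `G`. -/
def IsCritIndep (G : SimpleGraph V) (S : Set V) : Prop := IsCritIndepOn G Set.univ S

/-- A maximum critical independent set of `G[W]`: a critical independent set of
largest cardinality. -/
def IsMaxCritIndepOn (G : SimpleGraph V) (W S : Set V) : Prop :=
  IsCritIndepOn G W S ∧ ∀ T, IsCritIndepOn G W T → T.ncard ≤ S.ncard

/-- A maximum critical independent set of `G`. -/
def IsMaxCritIndep (G : SimpleGraph V) (S : Set V) : Prop := IsMaxCritIndepOn G Set.univ S

/-- A maximum independent set of the induced subgraph `G[W]`. -/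
def IsMaxIndepOn (G : SimpleGraph V) (W S : Set V) : Prop :=
  S ⊆ W ∧ IsIndep G S ∧ ∀ T ⊆ W, IsIndep G T → T.ncard ≤ S.ncard

/-- A maximum independent set of `G`. -/
def IsMaxIndep (G : SimpleGraph V) (S : Set V) : Prop := IsMaxIndepOn G Set.univ S

/-- The independence number of the induced subgraph `G[W]`. -/
noncomputable def alphaOn (G : SimpleGraph V) (W : Set V) : ℕ :=
  sSup {n | ∃ S ⊆ W, IsIndep G S ∧ S.ncard = n}

/-- The independence number `α(G)`. -/
noncomputable def alpha (G : SimpleGraph V) : ℕ := alphaOn G Set.univ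

/-- The maximum matching number `μ(G)`. -/
noncomputable def mu (G : SimpleGraph V) : ℕ :=
  sSup {n | ∃ M : G.Subgraph, M.IsMatching ∧ M.edgeSet.ncard = n}

/-- `G` is a König-Egerváry graph: `α(G) + μ(G) = |V(G)|`. -/
def IsKE (G : SimpleGraph V) : Prop := alpha G + mu G = Fintype.card V

/-- `nucleus(G[W])`: intersection of all maximum critical independent sets of `G[W]`. -/
def nucleusOn (G : SimpleGraph V) (W : Set V) : Set V := ⋂₀ {S | IsMaxCritIndepOn G W S}

/-- `nucleus(G)`. -/
def nucleus (G : SimpleGraph V) : Set V := nucleusOn G Set.univ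

/-- `diadem(G[W])`: union of all maximum critical independent sets of `G[W]`. -/
def diademOn (G : SimpleGraph V) (W : Set V) : Set V := ⋃₀ {S | IsMaxCritIndepOn G W S}

/-- `diadem(G)`. -/
def diadem (G : SimpleGraph V) : Set V := diademOn G Set.univ

/-- `ker(G)`: intersection of all critical independent sets of `G`. -/
def kerG (G : SimpleGraph V) : Set V := ⋂₀ {S | IsCritIndep G S}

/-- `core(G)`: intersection of all maximum independent sets of `G`. -/
def core (G : SimpleGraph V) : Set V := ⋂₀ {S | IsMaxIndep G S}

/-- `corona(G)`: union of all maximum independent sets of `G`. -/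
def corona (G : SimpleGraph V) : Set V := ⋃₀ {S | IsMaxIndep G S}

/-!
Fix a maximum critical independent set `J`; the nucleus lies in `J`. Since `d` is supermodular,
every critical independent set lies in `J ∪ N(J)`, and since `J` is critical, Hall's theorem
matches `N(J)` into `J`. A diadem vertex in `N(J)` belongs to some maximum critical independent
set `S`, so its partner in `J` is a neighbour outside `S`, hence outside the nucleus. Thus
`|diadem| ≤ |J| + |J \ nucleus|`, i.e. `|nucleus| + |diadem| ≤ 2|J| ≤ 2α(G)`.
-/

def IsCritical (G : SimpleGraph V) (X : Set V) : Prop := ∀ Y, dG G Y ≤ dG G X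

section CriticalSets

variable {G : SimpleGraph V}

omit [Fintype V] in
lemma isCritIndep_iff {S : Set V} : IsCritIndep G S ↔ IsIndep G S ∧ IsCritical G S :=
  ⟨fun h => ⟨h.2.1, fun Y => h.2.2 Y (subset_univ Y)⟩,
    fun h => ⟨subset_univ S, h.1, fun Y _ => h.2 Y⟩⟩

omit [Fintype V] in
lemma nbhd_mono {X Y : Set V} (h : X ⊆ Y) : nbhd G X ⊆ nbhd G Y := by
  rintro v ⟨u, hu, huv⟩
  exact ⟨u, h hu, huv⟩

omit [Fintype V] in
lemma nbhd_union (X Y : Set V) : nbhd G (X ∪ Y) = nbhd G X ∪ nbhd G Y := by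
  ext v
  simp only [nbhd, mem_union, mem_ofPred_eq]
  constructor
  · rintro ⟨u, hu | hu, huv⟩
    exacts [Or.inl ⟨u, hu, huv⟩, Or.inr ⟨u, hu, huv⟩]
  · rintro (⟨u, hu, huv⟩ | ⟨u, hu, huv⟩)
    exacts [⟨u, Or.inl hu, huv⟩, ⟨u, Or.inr hu, huv⟩]

omit [Fintype V] in
lemma dG_eq (X : Set V) : dG G X = (X.ncard : ℤ) - ((nbhd G X).ncard : ℤ) := by
  simp [dG, dOn]

lemma dG_add_dG_le_dG_union_add_dG_inter (X Y : Set V) :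
    dG G X + dG G Y ≤ dG G (X ∪ Y) + dG G (X ∩ Y) := by
  have hcard := ncard_union_add_ncard_inter X Y
  have hnbhd := ncard_union_add_ncard_inter (nbhd G X) (nbhd G Y)
  have hinter : (nbhd G (X ∩ Y)).ncard ≤ (nbhd G X ∩ nbhd G Y).ncard :=
    ncard_le_ncard (subset_inter (nbhd_mono inter_subset_left) (nbhd_mono inter_subset_right))
  simp only [dG_eq, nbhd_union]
  omega

lemma IsCritical.union {X Y : Set V} (hX : IsCritical G X) (hY : IsCritical G Y) :
    IsCritical G (X ∪ Y) := fun Z => by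
  have := dG_add_dG_le_dG_union_add_dG_inter (G := G) X Y
  linarith [hX Z, hY (X ∩ Y)]

lemma dG_add_ncard_le {X A B : Set V} (hB : B ⊆ nbhd G X)
    (hdisj : Disjoint B (nbhd G (X \ A))) :
    dG G X + B.ncard ≤ dG G (X \ A) + (X ∩ A).ncard := by
  have hX := ncard_inter_add_ncard_sdiff_eq_ncard X A
  have hnbhd : (nbhd G (X \ A) ∪ B).ncard ≤ (nbhd G X).ncard :=
    ncard_le_ncard (union_subset (nbhd_mono sdiff_subset) hB)
  rw [ncard_union_eq hdisj.symm] at hnbhd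
  simp only [dG_eq]
  omega

omit [Fintype V] in
lemma isIndep_diff_nbhd (X : Set V) : IsIndep G (X \ nbhd G X) :=
  fun u hu _ hv huv => hv.2 ⟨u, hu.1, huv⟩

omit [Fintype V] in
lemma IsIndep.union_diff_nbhd {S X : Set V} (hS : IsIndep G S) (hSX : S ⊆ X) :
    IsIndep G (S ∪ (X \ nbhd G X)) := by
  rintro u (hu | hu) v (hv | hv) huv
  · exact hS u hu v hv huv
  · exact hv.2 ⟨u, hSX hu, huv⟩
  · exact hu.2 ⟨v, hSX hv, huv.symm⟩
  · exact isIndep_diff_nbhd X u hu v hv huv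

lemma IsCritical.diff_nbhd {X : Set V} (hX : IsCritical G X) :
    IsCritical G (X \ nbhd G X) := fun Y => by
  have hdisj : Disjoint (X ∩ nbhd G X) (nbhd G (X \ nbhd G X)) :=
    disjoint_left.mpr fun v hv ⟨u, hu, huv⟩ => hu.2 ⟨v, hv.1, huv.symm⟩
  have := dG_add_ncard_le inter_subset_right hdisj
  linarith [hX Y]

lemma exists_isMaxCritIndep (G : SimpleGraph V) : ∃ J, IsMaxCritIndep G J := by
  obtain ⟨X, hX⟩ := Finite.exists_max (dG G)
  have hcrit : IsCritIndep G (X \ nbhd G X) :=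
    isCritIndep_iff.mpr ⟨isIndep_diff_nbhd X, IsCritical.diff_nbhd hX⟩
  have : Nonempty {S // IsCritIndep G S} := ⟨⟨_, hcrit⟩⟩
  obtain ⟨⟨J, hJ⟩, hmax⟩ := Finite.exists_max fun S : {S // IsCritIndep G S} => S.1.ncard
  exact ⟨J, hJ, fun T hT => hmax ⟨T, hT⟩⟩

lemma IsCritical.ncard_le_ncard_inter_nbhd {S B : Set V} (hS : IsCritical G S)
    (hB : B ⊆ nbhd G S) : B.ncard ≤ (S ∩ nbhd G B).ncard := by
  have hdisj : Disjoint B (nbhd G (S \ nbhd G B)) :=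
    disjoint_left.mpr fun v hv ⟨u, hu, huv⟩ => hu.2 ⟨v, hv, huv.symm⟩
  have := dG_add_ncard_le hB hdisj
  linarith [hS (S \ nbhd G B)]

lemma IsCritical.exists_injOn_nbhd {S : Set V} (hS : IsCritical G S) :
    ∃ h : V → V, InjOn h (nbhd G S) ∧ ∀ v ∈ nbhd G S, h v ∈ S ∧ G.Adj v (h v) := by
  classical
  obtain ⟨f, hf, hfS⟩ := (Fintype.all_card_le_filter_rel_iff_exists_injective
    fun (v : nbhd G S) (u : V) => u ∈ S ∧ G.Adj v u).mp fun A => by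
      have himage : (({u | ∃ a ∈ A, u ∈ S ∧ G.Adj a u} : Finset V) : Set V)
          = S ∩ nbhd G (Subtype.val '' (A : Set (nbhd G S))) := by
        ext u
        simp only [nbhd, Finset.coe_filter, Finset.mem_univ, true_and, mem_inter_iff, mem_image,
          mem_ofPred_eq, Subtype.exists, exists_and_right, exists_eq_right]
        tauto
      have := hS.ncard_le_ncard_inter_nbhd (B := Subtype.val '' (A : Set (nbhd G S)))
        (by rintro _ ⟨v, -, rfl⟩; exact v.2)
      rwa [← himage, ncard_coe_finset, ncard_image_of_injective _ Subtype.val_injective,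
        ncard_coe_finset] at this
  refine ⟨fun v => if hv : v ∈ nbhd G S then f ⟨v, hv⟩ else v, ?_, fun v hv => ?_⟩
  · intro a ha b hb hab
    simp only [dif_pos ha, dif_pos hb] at hab
    exact congrArg Subtype.val (hf hab)
  · simpa only [dif_pos hv] using hfS ⟨v, hv⟩

end CriticalSets

section Nucleus

variable {G : SimpleGraph V}

/-- `S ∪ J` is critical, hence so is `T = (S ∪ J) \ N(S ∪ J)`, hence so is `S ∪ T`, which is
independent; maximality of `S` forces `T ⊆ S`, and `T` contains every vertex of `J` outside
`N(S)`. -/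
lemma IsMaxCritIndep.subset_union_nbhd {S J : Set V} (hS : IsMaxCritIndep G S)
    (hJ : IsCritIndep G J) : J ⊆ S ∪ nbhd G S := by
  obtain ⟨hSind, hScrit⟩ := isCritIndep_iff.mp hS.1
  obtain ⟨hJind, hJcrit⟩ := isCritIndep_iff.mp hJ
  set T := (S ∪ J) \ nbhd G (S ∪ J)
  have hST : IsCritIndep G (S ∪ T) := isCritIndep_iff.mpr
    ⟨hSind.union_diff_nbhd subset_union_left, hScrit.union (hScrit.union hJcrit).diff_nbhd⟩
  have hTS : T ⊆ S :=
    union_eq_left.mp (eq_of_subset_of_ncard_le subset_union_left (hS.2 _ hST)).symm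
  intro j hj
  by_contra hjS
  rw [mem_union, not_or] at hjS
  refine hjS.1 (hTS ⟨Or.inr hj, ?_⟩)
  rw [nbhd_union]
  rintro (hjN | ⟨u, hu, huj⟩)
  exacts [hjS.2 hjN, hJind u hu j hj huj]

lemma diadem_subset_union_nbhd {J : Set V} (hJ : IsMaxCritIndep G J) :
    diadem G ⊆ J ∪ nbhd G J :=
  sUnion_subset fun _ hS => hJ.subset_union_nbhd hS.1

lemma IsCritical.ncard_diadem_inter_nbhd_le {J : Set V} (hJ : IsCritical G J) :
    (diadem G ∩ nbhd G J).ncard ≤ (J \ nucleus G).ncard := by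
  obtain ⟨h, hinj, hmatch⟩ := hJ.exists_injOn_nbhd
  refine ncard_le_ncard_of_injOn h (fun u ⟨⟨S, hS, huS⟩, huN⟩ => ⟨(hmatch u huN).1, ?_⟩)
    (hinj.mono inter_subset_right)
  exact fun hnuc => hS.1.2.1 u huS (h u) (sInter_subset_of_mem hS hnuc) (hmatch u huN).2

lemma IsIndep.ncard_le_alpha {S : Set V} (hS : IsIndep G S) : S.ncard ≤ alpha G := by
  refine le_csSup ⟨Fintype.card V, ?_⟩ ⟨S, subset_univ S, hS, rfl⟩
  rintro n ⟨T, -, -, rfl⟩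
  simpa only [ncard_univ, Nat.card_eq_fintype_card] using ncard_le_ncard (subset_univ T)

end Nucleus

/-- For any graph `G`, `|nucleus(G)| + |diadem(G)| ≤ 2α(G)`. -/
theorem stmt14 (G : SimpleGraph V) :
    (nucleus G).ncard + (diadem G).ncard ≤ 2 * alpha G := by
  obtain ⟨J, hJ⟩ := exists_isMaxCritIndep G
  obtain ⟨hJind, hJcrit⟩ := isCritIndep_iff.mp hJ.1
  have hnuc : (J \ nucleus G).ncard + (nucleus G).ncard = J.ncard :=
    ncard_sdiff_add_ncard_of_subset (sInter_subset_of_mem hJ)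
  have hdia : (diadem G).ncard ≤ J.ncard + (diadem G ∩ nbhd G J).ncard := by
    have hsub : diadem G ⊆ J ∪ (diadem G ∩ nbhd G J) := fun u hu =>
      (diadem_subset_union_nbhd hJ hu).imp id (⟨hu, ·⟩)
    exact (ncard_le_ncard hsub).trans (ncard_union_le _ _)
  have hmatch := hJcrit.ncard_diadem_inter_nbhd_le
  have hα := hJind.ncard_le_alpha
  omega
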